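/- The specification of non-deterministic insert is correct: for every element x and list ys, the set of results of ins (defined by ins x ys ∋ x :: ys and ins x (y :: ys) ∋ y :: zs for zs ∈ ins x ys) equals the set { as ++ [x] ++ bs | ys = as ++ bs }. -/

import Mathlib

inductive Ins {α : Type*} : α → List α → List α → Prop
  | base (x : α) (ys : List α) : Ins x ys (x :: ys)
  | step {x : α} {ys zs : List α} (y : α) : Ins x ys zs → Ins x (y :: ys) (y :: zs)

namespace Ins

variable {α : Type*} {x : α}

theorem append_left {ys zs : List α} (as : List α) (h : Ins x ys zs) :
    Ins x (as ++ ys) (as ++ zs) := by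
  induction as with
  | nil => exact h
  | cons a as ih => exact step a ih

theorem of_append (as bs : List α) : Ins x (as ++ bs) (as ++ [x] ++ bs) := by
  simpa using (base x bs).append_left as

theorem exists_append {ys zs : List α} (h : Ins x ys zs) :
    ∃ as bs, ys = as ++ bs ∧ zs = as ++ [x] ++ bs := by
  induction h with
  | base ys => exact ⟨[], ys, rfl, rfl⟩
  | step y _ ih =>
    obtain ⟨as, bs, rfl, rfl⟩ := ih
    exact ⟨y :: as, bs, rfl, rfl⟩

end Ins

theorem ins_spec_correct {α : Type*} (x : α) (ys zs : List α) :
    Ins x ys zs ↔ ∃ as bs, ys = as ++ bs ∧ zs = as ++ [x] ++ bs := by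
  refine ⟨Ins.exists_append, ?_⟩
  rintro ⟨as, bs, rfl, rfl⟩
  exact Ins.of_append as bs
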